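/- arXiv:1807.00654 — 2 statements merged into one kernel-verified Lean document; each statement's English description precedes it below -/
import Mathlib

section
/- Let J be a d×d real matrix diagonalizable with d distinct real eigenvalues λ_1, …, λ_d and corresponding unit eigenvectors v_1, …, v_d that are pairwise orthogonal. Fix an index i. Then the block lower-triangular 2d×2d matrix with diagonal blocks N₁ = J - 2λ_i v_i v_iᵀ and M₁ = J - λ_i I - v_i v_iᵀ(λ_i I + J) has spectrum consisting of -2λ_i, -λ_i, {λ_j : j ≠ i}, and {λ_j - λ_i : j ≠ i}. -/
open Matrix

/-!
Both diagonal blocks are diagonalised by the orthonormal eigenbasis `v` of `J`: the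
rank-one corrections only act on `vᵢ`, so `N₁ vₖ` and `M₁ vₖ` are multiples of `vₖ` for
every `k`. Hence each block is orthogonally similar to a diagonal matrix, and the spectrum
of the block-triangular matrix is the union of the two diagonals.
-/

theorem Set.range_ite_eq_setOf {α ι : Type*} [DecidableEq ι] (f : ι → α) (i : ι) (a : α) :
    Set.range (fun k => if k = i then a else f k) = {x | x = a ∨ ∃ j, j ≠ i ∧ x = f j} := by
  ext x
  constructor
  · rintro ⟨k, rfl⟩
    by_cases hk : k = i
    · simp [hk]
    · exact Or.inr ⟨k, hk, by simp [hk]⟩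
  · rintro (rfl | ⟨j, hj, rfl⟩)
    · exact ⟨i, if_pos rfl⟩
    · exact ⟨j, if_neg hj⟩

namespace Matrix

variable {K R m n : Type*} [CommRing R] [Fintype m] [Fintype n] [DecidableEq m] [DecidableEq n]

theorem spectrum_fromBlocks_zero₁₂ (A : Matrix m m R) (C : Matrix n m R)
    (D : Matrix n n R) :
    spectrum R (fromBlocks A 0 C D) = spectrum R A ∪ spectrum R D := by
  ext r
  have hshift : algebraMap R _ r - fromBlocks A 0 C D
      = fromBlocks (algebraMap R _ r - A) 0 (-C) (algebraMap R _ r - D) := by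
    simp only [Algebra.algebraMap_eq_smul_one, ← fromBlocks_one, fromBlocks_smul, smul_zero,
      sub_eq_add_neg, fromBlocks_neg, fromBlocks_add, neg_zero, add_zero, zero_add]
  simp only [Set.mem_union, spectrum.mem_iff, hshift, isUnit_fromBlocks_zero₁₂, not_and_or]

theorem isUnit_of_rows_orthonormal {v : n → n → R}
    (horth : ∀ j k, v j ⬝ᵥ v k = if j = k then 1 else 0) : IsUnit (of v) := by
  refine IsUnit.of_mul_eq_one (of v)ᵀ ?_
  ext j k
  simpa [mul_apply, one_apply, dotProduct] using horth j k

theorem spectrum_eq_range_of_mulVec_eq_smul [Field K] {X : Matrix n n K} {v : n → n → K}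
    {μ : n → K} (hv : IsUnit (of v)) (heig : ∀ k, X *ᵥ v k = μ k • v k) :
    spectrum K X = Set.range μ := by
  obtain ⟨P, hP⟩ : IsUnit (of v)ᵀ := (isUnit_transpose _).mpr hv
  have hconj : X * P = P * diagonal μ := by
    ext a k
    simpa [hP, mul_apply, mulVec, dotProduct, diagonal_apply, mul_comm]
      using congrFun (heig k) a
  rw [(Units.eq_mul_inv_iff_mul_eq P).mpr hconj, spectrum.units_conjugate, spectrum_diagonal]

section Eigenbasis

variable {J : Matrix n n R} {lam : n → R} {v : n → n → R}
  (heig : ∀ j, J *ᵥ v j = lam j • v j)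
  (horth : ∀ j k, v j ⬝ᵥ v k = if j = k then 1 else 0)
include heig horth

theorem sub_smul_vecMulVec_mulVec_eigenvector (i k : n) :
    (J - (2 * lam i) • vecMulVec (v i) (v i)) *ᵥ v k
      = (if k = i then -lam i else lam k) • v k := by
  rw [sub_mulVec, smul_mulVec, vecMulVec_mulVec, op_smul_eq_smul, heig, horth]
  by_cases hk : k = i
  · subst hk
    simp only [↓reduceIte, smul_smul, ← sub_smul]
    congr 1
    ring
  · simp [hk, Ne.symm hk]

theorem sub_vecMulVec_mul_mulVec_eigenvector (i k : n) :
    (J - lam i • (1 : Matrix n n R) - vecMulVec (v i) (v i) * (lam i • 1 + J)) *ᵥ v k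
      = (if k = i then -(2 * lam i) else lam k - lam i) • v k := by
  rw [sub_mulVec, sub_mulVec, ← mulVec_mulVec, add_mulVec, smul_mulVec, one_mulVec, heig,
    ← add_smul, mulVec_smul, vecMulVec_mulVec, op_smul_eq_smul, horth]
  by_cases hk : k = i
  · subst hk
    simp only [↓reduceIte, smul_smul, ← sub_smul]
    congr 1
    ring
  · simp only [if_neg hk, if_neg (Ne.symm hk), zero_smul, smul_zero, sub_zero, sub_smul]

end Eigenbasis

end Matrix

theorem stmt6_general {d : ℕ} (J : Matrix (Fin d) (Fin d) ℝ) (lam : Fin d → ℝ)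
    (v : Fin d → (Fin d → ℝ))
    (heig : ∀ j, J.mulVec (v j) = lam j • v j)
    (horth : ∀ j k, v j ⬝ᵥ v k = if j = k then 1 else 0)
    (i : Fin d) (C : Matrix (Fin d) (Fin d) ℝ) :
    spectrum ℝ
        (Matrix.fromBlocks
          (J - (2 * lam i) • Matrix.vecMulVec (v i) (v i)) 0 C
          (J - lam i • (1 : Matrix (Fin d) (Fin d) ℝ)
            - Matrix.vecMulVec (v i) (v i) * (lam i • (1 : Matrix (Fin d) (Fin d) ℝ) + J)))
      = {x : ℝ | x = -(2 * lam i) ∨ x = -(lam i) ∨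
          (∃ j, j ≠ i ∧ x = lam j) ∨ (∃ j, j ≠ i ∧ x = lam j - lam i)} := by
  have hv := isUnit_of_rows_orthonormal horth
  rw [spectrum_fromBlocks_zero₁₂,
    spectrum_eq_range_of_mulVec_eq_smul hv (sub_smul_vecMulVec_mulVec_eigenvector heig horth i),
    spectrum_eq_range_of_mulVec_eq_smul hv (sub_vecMulVec_mul_mulVec_eigenvector heig horth i),
    Set.range_ite_eq_setOf, Set.range_ite_eq_setOf]
  ext x
  simp only [Set.mem_union, Set.mem_ofPred_eq, or_assoc, or_left_comm]

/-- For `J` with `d` distinct real eigenvalues and orthonormal eigenvectors, the block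
lower-triangular matrix with diagonal blocks `N₁ = J - 2 λᵢ vᵢ vᵢᵀ` and
`M₁ = J - λᵢ I - vᵢ vᵢᵀ (λᵢ I + J)` (and arbitrary lower-left block `C`) has spectrum
`{-2λᵢ, -λᵢ} ∪ {λⱼ : j ≠ i} ∪ {λⱼ - λᵢ : j ≠ i}`. -/
theorem stmt6 {d : ℕ} (J : Matrix (Fin d) (Fin d) ℝ) (lam : Fin d → ℝ)
    (v : Fin d → (Fin d → ℝ))
    (hdist : Function.Injective lam)
    (heig : ∀ j, J.mulVec (v j) = lam j • v j)
    (horth : ∀ j k, v j ⬝ᵥ v k = if j = k then 1 else 0)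
    (i : Fin d) (C : Matrix (Fin d) (Fin d) ℝ) :
    spectrum ℝ
        (Matrix.fromBlocks
          (J - (2 * lam i) • Matrix.vecMulVec (v i) (v i)) 0 C
          (J - lam i • (1 : Matrix (Fin d) (Fin d) ℝ)
            - Matrix.vecMulVec (v i) (v i) * (lam i • (1 : Matrix (Fin d) (Fin d) ℝ) + J)))
      = {x : ℝ | x = -(2 * lam i) ∨ x = -(lam i) ∨
          (∃ j, j ≠ i ∧ x = lam j) ∨ (∃ j, j ≠ i ∧ x = lam j - lam i)} :=
  stmt6_general J lam v heig horth i C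
end

section
/- Let M₁ = J - λ_i I - v_i v_iᵀ(λ_i I + J) where J has d distinct real eigenvalues λ_1,…,λ_d with eigenvector basis v_1,…,v_d and ‖v_i‖ = 1. Then the vectors v_i and w_j := v_j - (v_jᵀ v_i)v_i (j ≠ i) are d linearly independent eigenvectors of M₁, with eigenvalues -2λ_i and λ_j - λ_i respectively. -/
namespace Matrix

variable {R n : Type*} [CommRing R] [Fintype n] [DecidableEq n]

def deflation (J : Matrix n n R) (μ : R) (u : n → R) : Matrix n n R :=
  J - μ • 1 - vecMulVec u u * (μ • 1 + J)

theorem deflation_mulVec (J : Matrix n n R) (μ : R) (u y : n → R) :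
    deflation J μ u *ᵥ y = J *ᵥ y - μ • y - (u ⬝ᵥ (μ • y + J *ᵥ y)) • u := by
  rw [deflation, sub_mulVec, sub_mulVec, ← mulVec_mulVec, vecMulVec_mulVec, op_smul_eq_smul,
    add_mulVec, smul_mulVec, one_mulVec]

variable {J : Matrix n n R} {μ : R} {u : n → R}

theorem deflation_mulVec_self (hu : J *ᵥ u = μ • u) (hunit : u ⬝ᵥ u = 1) :
    deflation J μ u *ᵥ u = (-(2 * μ)) • u := by
  rw [deflation_mulVec, hu]
  simp only [dotProduct_add, dotProduct_smul, hunit, smul_eq_mul, mul_one]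
  module

theorem deflation_mulVec_sub_proj {x : n → R} {ν : R} (hu : J *ᵥ u = μ • u)
    (hunit : u ⬝ᵥ u = 1) (hx : J *ᵥ x = ν • x) :
    deflation J μ u *ᵥ (x - (x ⬝ᵥ u) • u) = (ν - μ) • (x - (x ⬝ᵥ u) • u) := by
  rw [deflation_mulVec, mulVec_sub, mulVec_smul, hu, hx, dotProduct_comm x u]
  simp only [dotProduct_add, dotProduct_sub, dotProduct_smul, hunit, smul_eq_mul, mul_one]
  module

end Matrix

theorem LinearIndependent.ite_sub_smul {ι R M : Type*} [DecidableEq ι] [Ring R]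
    [AddCommGroup M] [Module R M] {v : ι → M} (hv : LinearIndependent R v) (i : ι)
    (c : ι → R) : LinearIndependent R (fun j => if j = i then v i else v j - c j • v i) := by
  convert (linearIndependent_add_smul_iff (c := fun j => -if j = i then 0 else c j) (i := i)
    (by simp)).mpr hv using 1
  ext j
  by_cases h : j = i <;> simp [h, sub_eq_add_neg]

theorem stmt16_general {d : ℕ} (J : Matrix (Fin d) (Fin d) ℝ) (lam : Fin d → ℝ)
    (v : Fin d → (Fin d → ℝ))
    (hbasis : LinearIndependent ℝ v)
    (heig : ∀ j, J.mulVec (v j) = lam j • v j)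
    (i : Fin d) (hvi : v i ⬝ᵥ v i = 1) :
    ((J - lam i • (1 : Matrix (Fin d) (Fin d) ℝ)
          - Matrix.vecMulVec (v i) (v i) * (lam i • (1 : Matrix (Fin d) (Fin d) ℝ) + J)).mulVec
          (v i) = (-(2 * lam i)) • v i) ∧
      (∀ j, j ≠ i →
        (J - lam i • (1 : Matrix (Fin d) (Fin d) ℝ)
            - Matrix.vecMulVec (v i) (v i) * (lam i • (1 : Matrix (Fin d) (Fin d) ℝ) + J)).mulVec
            (v j - (v j ⬝ᵥ v i) • v i)
          = (lam j - lam i) • (v j - (v j ⬝ᵥ v i) • v i)) ∧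
      LinearIndependent ℝ (fun j => if j = i then v i else v j - (v j ⬝ᵥ v i) • v i) :=
  ⟨Matrix.deflation_mulVec_self (heig i) hvi,
    fun j _ => Matrix.deflation_mulVec_sub_proj (heig i) hvi (heig j),
    hbasis.ite_sub_smul i _⟩

/-- `v_i` and `w_j := v_j - (v_jᵀ v_i) v_i` (`j ≠ i`) are `d` linearly independent
eigenvectors of `M₁ = J - λᵢ I - vᵢ vᵢᵀ(λᵢ I + J)`, with eigenvalues `-2λᵢ` and
`λⱼ - λᵢ` respectively. -/
theorem stmt16 {d : ℕ} (J : Matrix (Fin d) (Fin d) ℝ) (lam : Fin d → ℝ)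
    (v : Fin d → (Fin d → ℝ))
    (hdist : Function.Injective lam)
    (hbasis : LinearIndependent ℝ v)
    (heig : ∀ j, J.mulVec (v j) = lam j • v j)
    (i : Fin d) (hvi : v i ⬝ᵥ v i = 1) :
    ((J - lam i • (1 : Matrix (Fin d) (Fin d) ℝ)
          - Matrix.vecMulVec (v i) (v i) * (lam i • (1 : Matrix (Fin d) (Fin d) ℝ) + J)).mulVec
          (v i) = (-(2 * lam i)) • v i) ∧
      (∀ j, j ≠ i →
        (J - lam i • (1 : Matrix (Fin d) (Fin d) ℝ)
            - Matrix.vecMulVec (v i) (v i) * (lam i • (1 : Matrix (Fin d) (Fin d) ℝ) + J)).mulVec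
            (v j - (v j ⬝ᵥ v i) • v i)
          = (lam j - lam i) • (v j - (v j ⬝ᵥ v i) • v i)) ∧
      LinearIndependent ℝ (fun j => if j = i then v i else v j - (v j ⬝ᵥ v i) • v i) :=
  stmt16_general J lam v hbasis heig i hvi
end
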